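/- arXiv:2511.18189 — 2 statements merged into one kernel-verified Lean document; each statement's English description precedes it below -/
import Mathlib

section
/- Let (M, Ω) be a measurable space, H a separable Hilbert space, and (V_j : M → H)_{j∈ℕ} a sequence of measurable functions. For each x ∈ M and n ∈ ℕ let E_n(x) = span{V_1(x), …, V_n(x)}. Then for every measurable Y : M → H there exist measurable functions a_1, …, a_n : M → 𝕂 such that for every x ∈ M, the orthogonal projection of Y(x) onto E_n(x) equals Σ_{j=1}^n a_j(x) V_j(x). In particular, x ↦ proj_{E_n(x)} Y(x) is measurable. -/
/-!
Run Gram–Schmidt pointwise on `V 0 x, V 1 x, …`. Each Gram–Schmidt vector is the corresponding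
`V k x` minus its projections onto the earlier ones, and the projection of `w` onto `𝕜 ∙ u` is
`(⟪u, w⟫ / ‖u‖²) • u`, with a coefficient measurable in `x` (it is `0` when `u = 0`, so linearly
dependent `V j x` cause no trouble). By induction every Gram–Schmidt vector is therefore a
combination of the `V j x` with measurable coefficients. The Gram–Schmidt vectors are pairwise
orthogonal and span `E_n(x)`, so the projection of `Y x` onto `E_n(x)` is the sum of its
projections onto them, hence again such a combination.
-/

open scoped InnerProductSpace

/-- The span of the range of a function on a finite type is finite-dimensional
(recorded as an instance so that orthogonal projections onto such spans elaborate). -/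
instance spanRangeFiniteDimensional {K V : Type*} [DivisionRing K] [AddCommGroup V]
    [Module K V] {ι : Type*} [Finite ι] (f : ι → V) :
    FiniteDimensional K (Submodule.span K (Set.range f)) :=
  FiniteDimensional.span_of_finite K (Set.finite_range f)

open Finset InnerProductSpace

section MeasurableCombination

variable (R : Type*) {ι M E : Type*} [Semiring R] [MeasurableSpace R] [Fintype ι]
  [MeasurableSpace M] [AddCommMonoid E] [Module R E]

def IsMeasurableCombination (v : ι → M → E) (f : M → E) : Prop :=
  ∃ a : ι → M → R, (∀ i, Measurable (a i)) ∧ ∀ x, f x = ∑ i, a i x • v i x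

variable {R} {v : ι → M → E} {f g : M → E}

theorem isMeasurableCombination_apply [DecidableEq ι] (i : ι) :
    IsMeasurableCombination R v (v i) :=
  ⟨fun j _ => if j = i then 1 else 0, fun _ => measurable_const, fun x => by simp [ite_smul]⟩

theorem IsMeasurableCombination.add [MeasurableAdd₂ R] (hf : IsMeasurableCombination R v f)
    (hg : IsMeasurableCombination R v g) :
    IsMeasurableCombination R v (fun x => f x + g x) := by
  obtain ⟨a, ha, hfa⟩ := hf
  obtain ⟨b, hb, hgb⟩ := hg
  exact ⟨a + b, fun i => (ha i).add (hb i), fun x => by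
    simp [hfa, hgb, add_smul, sum_add_distrib]⟩

theorem IsMeasurableCombination.smul [MeasurableMul₂ R] {c : M → R} (hc : Measurable c)
    (hf : IsMeasurableCombination R v f) :
    IsMeasurableCombination R v (fun x => c x • f x) := by
  obtain ⟨a, ha, hfa⟩ := hf
  exact ⟨fun i x => c x * a i x, fun i => hc.mul (ha i), fun x => by
    simp [hfa, smul_sum, mul_smul]⟩

theorem IsMeasurableCombination.congr (hf : IsMeasurableCombination R v f)
    (h : ∀ x, f x = g x) : IsMeasurableCombination R v g := by
  obtain ⟨a, ha, hfa⟩ := hf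
  exact ⟨a, ha, fun x => (h x).symm.trans (hfa x)⟩

theorem isMeasurableCombination_sum [MeasurableAdd₂ R] {κ : Type*} (s : Finset κ)
    {f : κ → M → E} (hf : ∀ k ∈ s, IsMeasurableCombination R v (f k)) :
    IsMeasurableCombination R v (fun x => ∑ k ∈ s, f k x) := by
  classical
  induction s using Finset.induction_on with
  | empty => exact ⟨0, fun _ => measurable_const, fun x => by simp⟩
  | insert k s hk ih =>
    simp only [sum_insert hk]
    exact (hf k (mem_insert_self k s)).add (ih fun j hj => hf j (mem_insert_of_mem hj))

theorem IsMeasurableCombination.measurable [MeasurableSpace E] [MeasurableAdd₂ E]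
    [MeasurableSMul₂ R E] (hf : IsMeasurableCombination R v f) (hv : ∀ i, Measurable (v i)) :
    Measurable f := by
  obtain ⟨a, ha, hfa⟩ := hf
  rw [funext hfa]
  exact Finset.measurable_fun_sum _ fun i _ => (ha i).smul (hv i)

end MeasurableCombination

theorem IsMeasurableCombination.sub {R ι M E : Type*} [Ring R] [MeasurableSpace R]
    [MeasurableSub₂ R] [Fintype ι] [MeasurableSpace M] [AddCommGroup E] [Module R E]
    {v : ι → M → E} {f g : M → E} (hf : IsMeasurableCombination R v f)
    (hg : IsMeasurableCombination R v g) :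
    IsMeasurableCombination R v (fun x => f x - g x) := by
  obtain ⟨a, ha, hfa⟩ := hf
  obtain ⟨b, hb, hgb⟩ := hg
  exact ⟨a - b, fun i => (ha i).sub (hb i), fun x => by
    simp [hfa, hgb, sub_smul, sum_sub_distrib]⟩

section GramSchmidt

variable {𝕜 E : Type*} [RCLike 𝕜] [NormedAddCommGroup E] [InnerProductSpace 𝕜 E]

open Submodule in
theorem starProjection_span_range_eq_sum_of_orthogonal {ι : Type*} [Fintype ι] {v : ι → E}
    (hv : Pairwise fun i j => ⟪v i, v j⟫_𝕜 = 0) (y : E) :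
    (span 𝕜 (Set.range v)).starProjection y = ∑ i, (𝕜 ∙ v i).starProjection y := by
  classical
  apply eq_starProjection_of_mem_of_inner_eq_zero
  · exact sum_mem fun i _ =>
      span_mono (Set.singleton_subset_iff.2 (Set.mem_range_self i)) (starProjection_apply_mem _ _)
  · have hperp : ∀ j, ⟪y - ∑ i, (𝕜 ∙ v i).starProjection y, v j⟫_𝕜 = 0 := by
      intro j
      rw [inner_sub_left, sum_inner, sum_eq_single j, inner_starProjection_left_eq_right,
        starProjection_eq_self_iff.2 (mem_span_singleton_self _), sub_self]
      · intro i _ hij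
        rw [inner_starProjection_left_eq_right, (starProjection_apply_eq_zero_iff _).2
          (mem_orthogonal_singleton_iff_inner_right.2 (hv hij)), inner_zero_right]
      · simp
    have hle : span 𝕜 (Set.range v) ≤ (𝕜 ∙ (y - ∑ i, (𝕜 ∙ v i).starProjection y))ᗮ :=
      span_le.2 <| Set.range_subset_iff.2 fun j =>
        mem_orthogonal_singleton_iff_inner_right.2 (hperp j)
    exact fun w hw => mem_orthogonal_singleton_iff_inner_right.1 (hle hw)

theorem span_range_fin_gramSchmidt (f : ℕ → E) (n : ℕ) :
    Submodule.span 𝕜 (Set.range fun j : Fin n => gramSchmidt 𝕜 f j)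
      = Submodule.span 𝕜 (Set.range fun j : Fin n => f j) := by
  have hrange (g : ℕ → E) : Set.range (fun j : Fin n => g j) = g '' Set.Iio n := by
    rw [← Fin.range_val, ← Set.range_comp]
    rfl
  rw [hrange, hrange, span_gramSchmidt_Iio]

theorem starProjection_span_range_fin_eq_sum_gramSchmidt (f : ℕ → E) (n : ℕ) (y : E) :
    (Submodule.span 𝕜 (Set.range fun j : Fin n => f j)).starProjection y
      = ∑ j : Fin n, (𝕜 ∙ gramSchmidt 𝕜 f j).starProjection y := by
  simp only [← span_range_fin_gramSchmidt (𝕜 := 𝕜) f n]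
  exact starProjection_span_range_eq_sum_of_orthogonal
    (fun i j hij => gramSchmidt_orthogonal 𝕜 f (Fin.val_injective.ne hij)) y

variable [MeasurableSpace E] [BorelSpace E] [SecondCountableTopology E]
  {ι M : Type*} [Fintype ι] [MeasurableSpace M] {W : ι → M → E}

theorem IsMeasurableCombination.starProjection_singleton (hW : ∀ i, Measurable (W i))
    {u w : M → E} (hu : IsMeasurableCombination 𝕜 W u) (hw : Measurable w) :
    IsMeasurableCombination 𝕜 W (fun x => (𝕜 ∙ u x).starProjection (w x)) := by
  simp only [Submodule.starProjection_singleton]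
  have hu' := hu.measurable hW
  exact hu.smul ((hu'.inner hw).div (RCLike.measurable_ofReal.comp (hu'.norm.pow_const 2)))

theorem IsMeasurableCombination.gramSchmidt (hW : ∀ i, Measurable (W i)) {κ : Type*}
    [LinearOrder κ] [LocallyFiniteOrderBot κ] [WellFoundedLT κ] {f : κ → M → E} (k : κ)
    (hf : ∀ i ≤ k, IsMeasurableCombination 𝕜 W (f i)) :
    IsMeasurableCombination 𝕜 W fun x => InnerProductSpace.gramSchmidt 𝕜 (fun i => f i x) k := by
  induction k using WellFoundedLT.induction with
  | _ k ih =>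
    simp only [gramSchmidt_def 𝕜 _ k]
    refine (hf k le_rfl).sub (isMeasurableCombination_sum _ fun i hi => ?_)
    have hik : i < k := Finset.mem_Iio.1 hi
    exact (ih i hik fun j hj => hf j (hj.trans hik.le)).starProjection_singleton hW
      ((hf k le_rfl).measurable hW)

end GramSchmidt

theorem stmt_1_general {𝕜 : Type*} [RCLike 𝕜] {H : Type*} [NormedAddCommGroup H]
    [InnerProductSpace 𝕜 H] [SecondCountableTopology H]
    [MeasurableSpace H] [BorelSpace H]
    {M : Type*} [MeasurableSpace M] (V : ℕ → M → H) (hV : ∀ j, Measurable (V j))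
    (n : ℕ) (Y : M → H) (hY : Measurable Y) :
    (∃ a : Fin n → M → 𝕜, (∀ j, Measurable (a j)) ∧
      ∀ x : M,
        ((Submodule.orthogonalProjection (Submodule.span 𝕜 (Set.range fun j : Fin n => V j x)) (Y x) : H)
          = ∑ j : Fin n, a j x • V j x)) ∧
    Measurable fun x : M =>
      (Submodule.orthogonalProjection (Submodule.span 𝕜 (Set.range fun j : Fin n => V j x)) (Y x) : H) := by
  have hW : ∀ j : Fin n, Measurable (V j) := fun j => hV j
  have hgramSchmidt (j : Fin n) :
      IsMeasurableCombination 𝕜 (fun j : Fin n => V j) fun x => gramSchmidt 𝕜 (fun i => V i x) j :=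
    IsMeasurableCombination.gramSchmidt (f := V) hW (j : ℕ) fun i hi =>
      isMeasurableCombination_apply (v := fun j : Fin n => V j) ⟨i, hi.trans_lt j.2⟩
  have hproj : IsMeasurableCombination 𝕜 (fun j : Fin n => V j) fun x =>
      (Submodule.span 𝕜 (Set.range fun j : Fin n => V j x)).starProjection (Y x) := by
    refine (isMeasurableCombination_sum univ fun j _ =>
      (hgramSchmidt j).starProjection_singleton hW hY).congr fun x => ?_
    exact (starProjection_span_range_fin_eq_sum_gramSchmidt _ n (Y x)).symm
  exact ⟨hproj, hproj.measurable hW⟩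

/-- The orthogonal projection onto the span of finitely many measurable vector fields,
applied to a measurable function, is given by measurable coefficients, and is measurable. -/
theorem stmt_1 {𝕜 : Type*} [RCLike 𝕜] {H : Type*} [NormedAddCommGroup H]
    [InnerProductSpace 𝕜 H] [CompleteSpace H] [SecondCountableTopology H]
    [MeasurableSpace H] [BorelSpace H]
    {M : Type*} [MeasurableSpace M] (V : ℕ → M → H) (hV : ∀ j, Measurable (V j))
    (n : ℕ) (Y : M → H) (hY : Measurable Y) :
    (∃ a : Fin n → M → 𝕜, (∀ j, Measurable (a j)) ∧
      ∀ x : M,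
        ((Submodule.orthogonalProjection (Submodule.span 𝕜 (Set.range fun j : Fin n => V j x)) (Y x) : H)
          = ∑ j : Fin n, a j x • V j x)) ∧
    Measurable fun x : M =>
      (Submodule.orthogonalProjection (Submodule.span 𝕜 (Set.range fun j : Fin n => V j x)) (Y x) : H) :=
  stmt_1_general V hV n Y hY
end

section
/- Let a < b be reals and n ∈ ℕ. There exists a sequence (p_k)_{k∈ℕ} of real polynomials such that p_k(t) → 1_{[a,b]}(t) pointwise for every t ∈ ℝ, and |p_k(t)| ≤ 2 for all t ∈ [−n, n] and all k. -/
open Filter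

/-- There is a sequence of real polynomials converging pointwise to the indicator function of
`[a,b]` and uniformly bounded by `2` on `[-n, n]`. -/
theorem stmt_12 (a b : ℝ) (hab : a < b) (n : ℕ) :
    ∃ p : ℕ → Polynomial ℝ,
      (∀ t : ℝ, Tendsto (fun k => (p k).eval t) atTop
        (nhds (Set.indicator (Set.Icc a b) (fun _ => (1 : ℝ)) t))) ∧
      (∀ k : ℕ, ∀ t ∈ Set.Icc (-(n : ℝ)) (n : ℝ), |(p k).eval t| ≤ 2) := by
  -- trapezoid functions
  set g : ℕ → ℝ → ℝ := fun m t =>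
    max 0 (min 1 (min ((t - a) * (m + 1) + 1) ((b - t) * (m + 1) + 1))) with hg
  have gcont : ∀ m : ℕ, Continuous (g m) := by
    intro m
    apply Continuous.max continuous_const
    apply Continuous.min continuous_const
    exact Continuous.min (by continuity) (by continuity)
  have g0 : ∀ m t, 0 ≤ g m t := fun m t => le_max_left _ _
  have g1 : ∀ m t, g m t ≤ 1 := by
    intro m t
    apply max_le (by norm_num) (min_le_left _ _)
  -- g m t = 1 on [a,b]
  have gIn : ∀ m : ℕ, ∀ t ∈ Set.Icc a b, g m t = 1 := by
    intro m t ht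
    have h1 : (1 : ℝ) ≤ (t - a) * (m + 1) + 1 := by
      nlinarith [ht.1, (Nat.cast_nonneg m : (0:ℝ) ≤ m)]
    have h2 : (1 : ℝ) ≤ (b - t) * (m + 1) + 1 := by
      nlinarith [ht.2, (Nat.cast_nonneg m : (0:ℝ) ≤ m)]
    simp only [hg]
    rw [min_eq_left (le_min h1 h2)]
    norm_num
  -- g m t = 0 eventually for t outside [a,b]
  have gOut : ∀ t : ℝ, t ∉ Set.Icc a b → ∀ᶠ m : ℕ in atTop, g m t = 0 := by
    intro t ht
    rw [Set.mem_Icc, not_and_or, not_le, not_le] at ht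
    rcases ht with ht | ht
    · -- t < a
      filter_upwards [eventually_ge_atTop ⌈(a - t)⁻¹⌉₊] with m hm
      have hpos : (0:ℝ) < a - t := by linarith
      have : (a - t)⁻¹ ≤ (m : ℝ) + 1 := by
        calc (a - t)⁻¹ ≤ (⌈(a - t)⁻¹⌉₊ : ℝ) := Nat.le_ceil _
          _ ≤ (m : ℝ) := by exact_mod_cast hm
          _ ≤ (m : ℝ) + 1 := by linarith
      have h1 : (t - a) * (m + 1) + 1 ≤ 0 := by
        have : 1 ≤ (a - t) * ((m : ℝ) + 1) := by
          rw [inv_le_iff_one_le_mul₀ hpos] at this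
          linarith [this]
        nlinarith
      have hmin : min ((t - a) * (m + 1) + 1) ((b - t) * (m + 1) + 1) ≤ 0 :=
        le_trans (min_le_left _ _) h1
      simp only [hg]
      rw [min_eq_right (le_trans hmin (by norm_num)), max_eq_left hmin]
    · -- b < t
      filter_upwards [eventually_ge_atTop ⌈(t - b)⁻¹⌉₊] with m hm
      have hpos : (0:ℝ) < t - b := by linarith
      have : (t - b)⁻¹ ≤ (m : ℝ) + 1 := by
        calc (t - b)⁻¹ ≤ (⌈(t - b)⁻¹⌉₊ : ℝ) := Nat.le_ceil _
          _ ≤ (m : ℝ) := by exact_mod_cast hm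
          _ ≤ (m : ℝ) + 1 := by linarith
      have h1 : (b - t) * (m + 1) + 1 ≤ 0 := by
        have : 1 ≤ (t - b) * ((m : ℝ) + 1) := by
          rw [inv_le_iff_one_le_mul₀ hpos] at this
          linarith [this]
        nlinarith
      have hmin : min ((t - a) * (m + 1) + 1) ((b - t) * (m + 1) + 1) ≤ 0 :=
        le_trans (min_le_right _ _) h1
      simp only [hg]
      rw [min_eq_right (le_trans hmin (by norm_num)), max_eq_left hmin]
  -- choose polynomials
  have H : ∀ m : ℕ, ∃ p : Polynomial ℝ,
      ∀ x ∈ Set.Icc (-((n : ℝ) + m)) ((n : ℝ) + m), |p.eval x - g m x| < 1 / (m + 1) := by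
    intro m
    exact exists_polynomial_near_of_continuousOn _ _ _ ((gcont m).continuousOn) _ (by positivity)
  choose p hp using H
  refine ⟨p, ?_, ?_⟩
  · intro t
    -- eventually t ∈ [-(n+m), n+m]
    have hev : ∀ᶠ m : ℕ in atTop, |(p m).eval t - g m t| < 1 / (m + 1) := by
      filter_upwards [eventually_ge_atTop ⌈|t|⌉₊] with m hm
      have : |t| ≤ (n : ℝ) + m := by
        calc |t| ≤ (⌈|t|⌉₊ : ℝ) := Nat.le_ceil _
          _ ≤ (m : ℝ) := by exact_mod_cast hm
          _ ≤ (n : ℝ) + m := by linarith [Nat.cast_nonneg (α := ℝ) n]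
      exact hp m t (abs_le.mp this |> fun h => Set.mem_Icc.mpr h)
    have hg_tend : Tendsto (fun m => g m t)
        atTop (nhds (Set.indicator (Set.Icc a b) (fun _ => (1 : ℝ)) t)) := by
      by_cases ht : t ∈ Set.Icc a b
      · rw [Set.indicator_of_mem ht]
        exact tendsto_const_nhds.congr' (Eventually.of_forall fun m => (gIn m t ht).symm)
      · rw [Set.indicator_of_notMem ht]
        exact tendsto_const_nhds.congr' ((gOut t ht).mono fun m h => h.symm)
    have hdiff : Tendsto (fun m : ℕ => (p m).eval t - g m t) atTop (nhds 0) := by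
      refine squeeze_zero_norm' (a := fun m : ℕ => 1 / ((m : ℝ) + 1)) ?_
        tendsto_one_div_add_atTop_nhds_zero_nat
      filter_upwards [hev] with m h
      simpa using le_of_lt h
    have := hdiff.add hg_tend
    simpa using this
  · intro k t ht
    have htk : t ∈ Set.Icc (-((n : ℝ) + k)) ((n : ℝ) + k) := by
      rcases ht with ⟨h1, h2⟩
      constructor <;> [linarith [Nat.cast_nonneg (α := ℝ) k]; linarith [Nat.cast_nonneg (α := ℝ) k]]
    have h := hp k t htk
    have hb : |g k t| ≤ 1 := abs_le.mpr ⟨by linarith [g0 k t], g1 k t⟩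
    have h1k : 1 / ((k:ℝ) + 1) ≤ 1 := by
      rw [div_le_one (by positivity)]; linarith [Nat.cast_nonneg (α := ℝ) k]
    calc |(p k).eval t| = |((p k).eval t - g k t) + g k t| := by ring_nf
      _ ≤ |(p k).eval t - g k t| + |g k t| := abs_add_le _ _
      _ ≤ 1 / ((k:ℝ)+1) + 1 := by linarith [le_of_lt h]
      _ ≤ 2 := by linarith
end
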